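/- arXiv:2509.09493 — 9 statements merged into one kernel-verified Lean document; each statement's English description precedes it below -/
import Mathlib

section
/- Let 𝔽 be an asymmetric fail-prone system satisfying the B³-condition and let ℚ be its canonical quorum system. For any execution with faulty set F ⊆ 𝒫 that admits a nonempty guild 𝒢, the tolerated system 𝒯 of ℚ, viewed as a symmetric fail-prone system, satisfies the Q³-condition and contains the faulty set in its downward closure, i.e., there exists T ∈ 𝒯 with F ⊆ T. -/
/-- Downward closure `𝒜*` of a collection of sets. -/
def starC {P : Type*} (A : Set (Set P)) : Set (Set P) := {B | ∃ A' ∈ A, B ⊆ A'}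

/-- The canonical quorum system of a fail-prone system: `𝒬ᵢ = {𝒫 \ Fᵢ : Fᵢ ∈ ℱᵢ}`. -/
def canonicalQuorum {P : Type*} (FF : P → Set (Set P)) : P → Set (Set P) :=
  fun i => {Q | ∃ Fi ∈ FF i, Q = Fiᶜ}

/-- Consistency property of a quorum system for a fail-prone system. -/
def Consistency {P : Type*} (FF QQ : P → Set (Set P)) : Prop :=
  ∀ i j : P, ∀ Qi ∈ QQ i, ∀ Qj ∈ QQ j, ∀ Fij ∈ starC (FF i) ∩ starC (FF j),
    ¬ (Qi ∩ Qj ⊆ Fij)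

/-- Availability property of a quorum system for a fail-prone system. -/
def Availability {P : Type*} (FF QQ : P → Set (Set P)) : Prop :=
  ∀ i : P, ∀ Fi ∈ FF i, ∃ Qi ∈ QQ i, Fi ∩ Qi = ∅

/-- The `B³`-condition for an asymmetric fail-prone system. -/
def B3 {P : Type*} (FF : P → Set (Set P)) : Prop :=
  ∀ i j : P, ∀ Fi ∈ FF i, ∀ Fj ∈ FF j, ∀ Fij ∈ starC (FF i) ∩ starC (FF j),
    ¬ (Set.univ ⊆ Fi ∪ Fj ∪ Fij)

/-- The `Q³`-condition for a symmetric fail-prone system. -/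
def Q3 {P : Type*} (S : Set (Set P)) : Prop :=
  ∀ T1 ∈ S, ∀ T2 ∈ S, ∀ T3 ∈ S, ¬ (Set.univ ⊆ T1 ∪ T2 ∪ T3)

/-- A process is wise in an execution with faulty set `F` if it is correct
and `F` belongs to the downward closure of its fail-prone sets. -/
def Wise {P : Type*} (FF : P → Set (Set P)) (F : Set P) (p : P) : Prop :=
  p ∉ F ∧ F ∈ starC (FF p)

/-- A process is naive if it is correct but not wise. -/
def Naive {P : Type*} (FF : P → Set (Set P)) (F : Set P) (p : P) : Prop :=
  p ∉ F ∧ F ∉ starC (FF p)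

/-- A guild for an execution with faulty set `F`: all members are wise, and
each member has a quorum contained in the guild. -/
def Guild {P : Type*} (FF QQ : P → Set (Set P)) (F G : Set P) : Prop :=
  (∀ p ∈ G, Wise FF F p) ∧ (∀ p ∈ G, ∃ Q ∈ QQ p, Q ⊆ G)

/-- A set `T` is tolerated by the canonical quorum system of `FF` if it is the
complement of a nonempty guild for some execution. -/
def Tolerated {P : Type*} (FF : P → Set (Set P)) (T : Set P) : Prop :=
  ∃ F G : Set P, G.Nonempty ∧ Guild FF (canonicalQuorum FF) F G ∧ T = Gᶜ

/-- The tolerated system: the collection of all tolerated sets. -/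
def ToleratedSystem {P : Type*} (FF : P → Set (Set P)) : Set (Set P) :=
  {T | Tolerated FF T}

/-- Depth of a process, relative to a quorum system `QQ` and faulty set `F`:
every correct process has depth 0, and a correct process has depth `d+1` if
one of its quorums consists entirely of processes of depth `d`. -/
inductive HasDepth {P : Type*} (QQ : P → Set (Set P)) (F : Set P) : P → ℕ → Prop
  | zero (p : P) (hp : p ∉ F) : HasDepth QQ F p 0
  | succ (p : P) (d : ℕ) (hp : p ∉ F) (Q : Set P) (hQ : Q ∈ QQ p)
      (hall : ∀ q ∈ Q, HasDepth QQ F q d) : HasDepth QQ F p (d + 1)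

/-- `K` is a kernel for process `p`: it intersects every quorum of `p`. -/
def IsKernel {P : Type*} (QQ : P → Set (Set P)) (p : P) (K : Set P) : Prop :=
  ∀ Q ∈ QQ p, (K ∩ Q).Nonempty

lemma guild_inter_aux {P : Type*} (FF : P → Set (Set P)) (hB3 : B3 FF)
    {F1 G1 F2 G2 : Set P} (h1 : G1.Nonempty) (hG1 : Guild FF (canonicalQuorum FF) F1 G1)
    (h2 : G2.Nonempty) (hG2 : Guild FF (canonicalQuorum FF) F2 G2) :
    (G1 ∩ G2).Nonempty := by
  obtain ⟨i, hi⟩ := h1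
  obtain ⟨j, hj⟩ := h2
  obtain ⟨Qi, ⟨Fi, hFi, rfl⟩, hQi⟩ := hG1.2 i hi
  obtain ⟨Qj, ⟨Fj, hFj, rfl⟩, hQj⟩ := hG2.2 j hj
  have h := hB3 i j Fi hFi Fj hFj ∅
    ⟨⟨Fi, hFi, Set.empty_subset _⟩, ⟨Fj, hFj, Set.empty_subset _⟩⟩
  rw [Set.not_subset] at h
  obtain ⟨x, -, hx⟩ := h
  simp only [Set.mem_union, Set.mem_empty_iff_false, or_false] at hx
  push_neg at hx
  exact ⟨x, hQi hx.1, hQj hx.2⟩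

/-- If `𝔽` satisfies `B³` and an execution with faulty set `F`
admits a nonempty guild for the canonical quorum system, then the tolerated
system satisfies `Q³` and contains a tolerated set covering `F`. -/
theorem stmt_0 {P : Type*} [Fintype P] (FF : P → Set (Set P)) (hB3 : B3 FF)
    (F G : Set P) (hne : G.Nonempty) (hG : Guild FF (canonicalQuorum FF) F G) :
    Q3 (ToleratedSystem FF) ∧ ∃ T ∈ ToleratedSystem FF, F ⊆ T := by
  constructor
  · rintro T1 ⟨F1, G1, hne1, hG1, rfl⟩ T2 ⟨F2, G2, hne2, hG2, rfl⟩
      T3 ⟨F3, G3, hne3, hG3, rfl⟩ hcov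
    -- pick i ∈ G1 ∩ G3 and j ∈ G2 ∩ G3
    obtain ⟨i, hi1, hi3⟩ := guild_inter_aux FF hB3 hne1 hG1 hne3 hG3
    obtain ⟨j, hj2, hj3⟩ := guild_inter_aux FF hB3 hne2 hG2 hne3 hG3
    -- quorums of i in G1, of j in G2
    obtain ⟨Qi, ⟨Fi, hFi, rfl⟩, hQi⟩ := hG1.2 i hi1
    obtain ⟨Qj, ⟨Fj, hFj, rfl⟩, hQj⟩ := hG2.2 j hj2
    -- quorums of i and j in G3 show G3ᶜ ∈ starC (FF i) ∩ starC (FF j)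
    obtain ⟨Qi3, ⟨Fi3, hFi3, rfl⟩, hQi3⟩ := hG3.2 i hi3
    obtain ⟨Qj3, ⟨Fj3, hFj3, rfl⟩, hQj3⟩ := hG3.2 j hj3
    have hi3' : G3ᶜ ⊆ Fi3 := by
      intro x hx
      by_contra hxF
      exact hx (hQi3 hxF)
    have hj3' : G3ᶜ ⊆ Fj3 := by
      intro x hx
      by_contra hxF
      exact hx (hQj3 hxF)
    have h := hB3 i j Fi hFi Fj hFj G3ᶜ ⟨⟨Fi3, hFi3, hi3'⟩, ⟨Fj3, hFj3, hj3'⟩⟩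
    apply h
    intro x _
    rcases hcov (Set.mem_univ x) with (hx | hx) | hx
    · exact Or.inl (Or.inl (by by_contra h; exact hx (hQi h)))
    · exact Or.inl (Or.inr (by by_contra h; exact hx (hQj h)))
    · exact Or.inr hx
  · refine ⟨Gᶜ, ⟨F, G, hne, hG, rfl⟩, ?_⟩
    intro x hx hxG
    exact (hG.1 x hxG).1 hx
end

section
/- Let 𝔽 be an asymmetric fail-prone system satisfying the B³-condition and let ℚ be its canonical quorum system. Then the tolerated system 𝒯 of ℚ satisfies the Q³-condition. -/
/-- If `𝔽` satisfies `B³`, the tolerated system of its canonical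
quorum system satisfies `Q³`. -/
theorem stmt_2 {P : Type*} [Fintype P] (FF : P → Set (Set P)) (hB3 : B3 FF) :
    Q3 (ToleratedSystem FF) := by
  intro T1 hT1 T2 hT2 T3 hT3 hcontra
  obtain ⟨F1, G1, ⟨g1, hg1⟩, ⟨hw1, hc1⟩, rfl⟩ := hT1
  obtain ⟨F2, G2, ⟨g2, hg2⟩, ⟨hw2, hc2⟩, rfl⟩ := hT2
  obtain ⟨F3, G3, ⟨g3, hg3⟩, ⟨hw3, hc3⟩, rfl⟩ := hT3
  -- each guild member has a fail-prone set whose complement lies in the guild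
  have key : ∀ (G : Set P) (hc : ∀ p ∈ G, ∃ Q ∈ canonicalQuorum FF p, Q ⊆ G),
      ∀ p ∈ G, ∃ A ∈ FF p, Aᶜ ⊆ G := by
    intro G hc p hp
    obtain ⟨Q, ⟨A, hA, rfl⟩, hQ⟩ := hc p hp
    exact ⟨A, hA, hQ⟩
  have empty_star : ∀ (G : Set P) (hc : ∀ p ∈ G, ∃ Q ∈ canonicalQuorum FF p, Q ⊆ G),
      ∀ p ∈ G, (∅ : Set P) ∈ starC (FF p) := by
    intro G hc p hp
    obtain ⟨A, hA, -⟩ := key G hc p hp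
    exact ⟨A, hA, Set.empty_subset A⟩
  -- a point in G1 ∩ G2
  obtain ⟨A1, hA1, hA1G⟩ := key G1 hc1 g1 hg1
  obtain ⟨A2, hA2, hA2G⟩ := key G2 hc2 g2 hg2
  have h12 := hB3 g1 g2 A1 hA1 A2 hA2 ∅
    ⟨empty_star G1 hc1 g1 hg1, empty_star G2 hc2 g2 hg2⟩
  rw [Set.not_subset] at h12
  obtain ⟨q, -, hq⟩ := h12
  simp only [Set.mem_union, Set.mem_empty_iff_false, or_false, not_or] at hq
  have hqG1 : q ∈ G1 := hA1G hq.1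
  have hqG2 : q ∈ G2 := hA2G hq.2
  -- a point in G2 ∩ G3
  obtain ⟨A3, hA3, hA3G⟩ := key G3 hc3 g3 hg3
  have h23 := hB3 g2 g3 A2 hA2 A3 hA3 ∅
    ⟨empty_star G2 hc2 g2 hg2, empty_star G3 hc3 g3 hg3⟩
  rw [Set.not_subset] at h23
  obtain ⟨p, -, hp⟩ := h23
  simp only [Set.mem_union, Set.mem_empty_iff_false, or_false, not_or] at hp
  have hpG2 : p ∈ G2 := hA2G hp.1
  have hpG3 : p ∈ G3 := hA3G hp.2
  -- quorums of q in G1 and of p in G3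
  obtain ⟨B1, hB1, hB1G⟩ := key G1 hc1 q hqG1
  obtain ⟨B3, hB3', hB3G⟩ := key G3 hc3 p hpG3
  -- G2ᶜ is in both stars
  obtain ⟨C, hC, hCG⟩ := key G2 hc2 q hqG2
  obtain ⟨C', hC', hC'G⟩ := key G2 hc2 p hpG2
  have hstar : G2ᶜ ∈ starC (FF q) ∩ starC (FF p) := by
    constructor
    · exact ⟨C, hC, fun x hx => by
        by_contra hxc; exact hx (hCG hxc)⟩
    · exact ⟨C', hC', fun x hx => by
        by_contra hxc; exact hx (hC'G hxc)⟩
  have hfin := hB3 q p B1 hB1 B3 hB3' G2ᶜ hstar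
  rw [Set.not_subset] at hfin
  obtain ⟨r, -, hr⟩ := hfin
  simp only [Set.mem_union, Set.mem_compl_iff, not_or, not_not] at hr
  have : r ∈ G1ᶜ ∪ G2ᶜ ∪ G3ᶜ := hcontra (Set.mem_univ r)
  simp only [Set.mem_union, Set.mem_compl_iff] at this
  rcases this with (h | h) | h
  · exact h (hB1G hr.1.1)
  · exact h hr.2
  · exact h (hB3G hr.1.2)
end

section
/- Let 𝔽 be an asymmetric fail-prone system satisfying the B³-condition and let ℚ be its canonical quorum system. For k = 1, 2, 3, let F_k ⊆ 𝒫 be a faulty set and let 𝒢_k be a nonempty guild for F_k (with respect to ℚ). Then 𝒢₁ ∩ 𝒢₂ ∩ 𝒢₃ ≠ ∅. -/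
lemma guild_compl_subset {P : Type*} {FF : P → Set (Set P)} {F G : Set P}
    (hG : Guild FF (canonicalQuorum FF) F G) {p : P} (hp : p ∈ G) :
    ∃ Fi ∈ FF p, Gᶜ ⊆ Fi := by
  obtain ⟨Q, hQ, hQG⟩ := hG.2 p hp
  obtain ⟨Fi, hFi, rfl⟩ := hQ
  exact ⟨Fi, hFi, by
    intro x hx
    by_contra hxF
    exact hx (hQG hxF)⟩

lemma guilds_pairwise {P : Type*} {FF : P → Set (Set P)} (hB3 : B3 FF)
    {Fa Fb Ga Gb : Set P}
    (hnea : Ga.Nonempty) (hGa : Guild FF (canonicalQuorum FF) Fa Ga)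
    (hneb : Gb.Nonempty) (hGb : Guild FF (canonicalQuorum FF) Fb Gb) :
    (Ga ∩ Gb).Nonempty := by
  obtain ⟨p, hp⟩ := hnea
  obtain ⟨q, hq⟩ := hneb
  obtain ⟨Fp, hFp, hGap⟩ := guild_compl_subset hGa hp
  obtain ⟨Fq, hFq, hGbq⟩ := guild_compl_subset hGb hq
  have h := hB3 p q Fp hFp Fq hFq ∅
    ⟨⟨Fp, hFp, Set.empty_subset _⟩, ⟨Fq, hFq, Set.empty_subset _⟩⟩
  rw [Set.not_subset] at h
  obtain ⟨x, -, hx⟩ := h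
  simp only [Set.mem_union, Set.mem_empty_iff_false, or_false, not_or] at hx
  refine ⟨x, ?_, ?_⟩
  · by_contra hxa; exact hx.1 (hGap hxa)
  · by_contra hxb; exact hx.2 (hGbq hxb)

/-- If `𝔽` satisfies `B³`, then any three nonempty guilds (for
possibly different faulty sets, w.r.t. the canonical quorum system) intersect. -/
theorem stmt_3 {P : Type*} [Fintype P] (FF : P → Set (Set P)) (hB3 : B3 FF)
    (F1 F2 F3 G1 G2 G3 : Set P)
    (hne1 : G1.Nonempty) (hG1 : Guild FF (canonicalQuorum FF) F1 G1)
    (hne2 : G2.Nonempty) (hG2 : Guild FF (canonicalQuorum FF) F2 G2)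
    (hne3 : G3.Nonempty) (hG3 : Guild FF (canonicalQuorum FF) F3 G3) :
    (G1 ∩ G2 ∩ G3).Nonempty := by
  obtain ⟨p, hp1, hp2⟩ := guilds_pairwise hB3 hne1 hG1 hne2 hG2
  obtain ⟨q, hq2, hq3⟩ := guilds_pairwise hB3 hne2 hG2 hne3 hG3
  obtain ⟨Fa, hFa, hG1a⟩ := guild_compl_subset hG1 hp1
  obtain ⟨Fb, hFb, hG2b⟩ := guild_compl_subset hG2 hp2
  obtain ⟨Fb', hFb', hG2b'⟩ := guild_compl_subset hG2 hq2
  obtain ⟨Fc, hFc, hG3c⟩ := guild_compl_subset hG3 hq3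
  have h := hB3 p q Fa hFa Fc hFc (Fb ∩ Fb')
    ⟨⟨Fb, hFb, Set.inter_subset_left⟩, ⟨Fb', hFb', Set.inter_subset_right⟩⟩
  rw [Set.not_subset] at h
  obtain ⟨x, -, hx⟩ := h
  simp only [Set.mem_union, Set.mem_inter_iff, not_or] at hx
  refine ⟨x, ⟨?_, ?_⟩, ?_⟩
  · by_contra h1; exact hx.1.1 (hG1a h1)
  · by_contra h2; exact hx.2 ⟨hG2b h2, hG2b' h2⟩
  · by_contra h3; exact hx.1.2 (hG3c h3)
end

section
/- Fix an asymmetric fail-prone system 𝔽, a quorum system ℚ, and a faulty set F. If 𝒢 is a guild for F (with respect to ℚ), then every process p ∈ 𝒢 has depth d for every natural number d (i.e., guild members have infinite depth). -/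
/-- Every member of a guild has depth `d` for every natural
number `d` (guild members have infinite depth). -/
theorem stmt_8 {P : Type*} [Fintype P] (FF QQ : P → Set (Set P))
    (F G : Set P) (hG : Guild FF QQ F G) :
    ∀ p ∈ G, ∀ d : ℕ, HasDepth QQ F p d := by
  intro p hp d
  induction d generalizing p with
  | zero => exact HasDepth.zero p (hG.1 p hp).1
  | succ d ih =>
    obtain ⟨Q, hQ, hQG⟩ := hG.2 p hp
    exact HasDepth.succ p d (hG.1 p hp).1 Q hQ (fun q hq => ih q (hQG hq))
end

section
/- Let 𝔽 be an asymmetric fail-prone system and ℚ a quorum system for 𝔽 satisfying the consistency property. Fix an execution with faulty set F, and let p_i and p_j be wise processes (i.e., F ∈ ℱ_i* and F ∈ ℱ_j*). Then for every quorum Q_i ∈ 𝒬_i, the set Q_i \ F is a kernel for p_j, i.e., (Q_i \ F) ∩ Q_j ≠ ∅ for every quorum Q_j ∈ 𝒬_j. -/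
/-- Under consistency, for wise `pᵢ, pⱼ` and any quorum `Qᵢ` of
`pᵢ`, the set `Qᵢ \ F` is a kernel for `pⱼ`. -/
theorem stmt_10 {P : Type*} [Fintype P] (FF QQ : P → Set (Set P))
    (hcons : Consistency FF QQ) (F : Set P) (i j : P)
    (hi : Wise FF F i) (hj : Wise FF F j) :
    ∀ Qi ∈ QQ i, IsKernel QQ j (Qi \ F) := by
  intro Qi hQi Qj hQj
  have h := hcons i j Qi hQi Qj hQj F ⟨hi.2, hj.2⟩
  rw [Set.not_subset] at h
  obtain ⟨x, ⟨hxi, hxj⟩, hxF⟩ := h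
  exact ⟨x, ⟨hxi, hxF⟩, hxj⟩
end

section
/- Let 𝔽 be an asymmetric fail-prone system and ℚ a quorum system for 𝔽 satisfying the consistency property. Fix an execution with faulty set F, wise processes p_i and p_j (i.e., F ∈ ℱ_i* and F ∈ ℱ_j*), a type V of values, and functions val_i, val_j : 𝒫 → V (the value each process reported to p_i and to p_j, respectively) such that val_i(q) = val_j(q) for every correct process q (correct processes report a single value). If there is a quorum Q_i ∈ 𝒬_i with val_i(q) = m for all q ∈ Q_i and a quorum Q_j ∈ 𝒬_j with val_j(q) = m' for all q ∈ Q_j, then m = m'. -/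
/-- Under consistency, if a wise process sees a quorum reporting
`m` and another wise process sees a quorum reporting `m'`, and correct
processes report consistently, then `m = m'`. -/
theorem stmt_12 {P : Type*} [Fintype P] (FF QQ : P → Set (Set P))
    (hcons : Consistency FF QQ) (F : Set P) (i j : P)
    (hi : Wise FF F i) (hj : Wise FF F j)
    {V : Type*} (vali valj : P → V)
    (hval : ∀ q : P, q ∉ F → vali q = valj q)
    (m m' : V) (Qi : Set P) (hQi : Qi ∈ QQ i) (hmi : ∀ q ∈ Qi, vali q = m)
    (Qj : Set P) (hQj : Qj ∈ QQ j) (hmj : ∀ q ∈ Qj, valj q = m') :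
    m = m' := by
  have h := hcons i j Qi hQi Qj hQj F ⟨hi.2, hj.2⟩
  rw [Set.not_subset] at h
  obtain ⟨q, ⟨hq1, hq2⟩, hqF⟩ := h
  rw [← hmi q hq1, hval q hqF, hmj q hq2]
end

section
/- Let 𝔽 be an asymmetric fail-prone system satisfying the B³-condition. Then the canonical quorum system of 𝔽 satisfies the consistency and availability properties, i.e., it is a valid asymmetric Byzantine quorum system for 𝔽. -/
/-- If `𝔽` satisfies `B³`, then its canonical quorum system
satisfies consistency and availability. -/
theorem stmt_13 {P : Type*} [Fintype P] (FF : P → Set (Set P)) (hB3 : B3 FF) :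
    Consistency FF (canonicalQuorum FF) ∧ Availability FF (canonicalQuorum FF) := by
  constructor
  · rintro i j Qi ⟨Fi, hFi, rfl⟩ Qj ⟨Fj, hFj, rfl⟩ Fij hFij hsub
    apply hB3 i j Fi hFi Fj hFj Fij hFij
    intro x _
    by_cases hi : x ∈ Fi
    · exact Or.inl (Or.inl hi)
    by_cases hj : x ∈ Fj
    · exact Or.inl (Or.inr hj)
    · exact Or.inr (hsub ⟨hi, hj⟩)
  · intro i Fi hFi
    exact ⟨Fiᶜ, ⟨Fi, hFi, rfl⟩, by simp⟩
end

section
/- Let 𝔽 be an asymmetric fail-prone system. If there exists a quorum system ℚ for 𝔽 satisfying the consistency and availability properties, then 𝔽 satisfies the B³-condition. -/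
/-- If some quorum system for `𝔽` satisfies consistency and
availability, then `𝔽` satisfies `B³`. -/
theorem stmt_14 {P : Type*} [Fintype P] (FF : P → Set (Set P))
    (h : ∃ QQ : P → Set (Set P), Consistency FF QQ ∧ Availability FF QQ) :
    B3 FF := by
  obtain ⟨QQ, hC, hA⟩ := h
  intro i j Fi hFi Fj hFj Fij hFij hsub
  obtain ⟨Qi, hQi, hdi⟩ := hA i Fi hFi
  obtain ⟨Qj, hQj, hdj⟩ := hA j Fj hFj
  have := hC i j Qi hQi Qj hQj Fij hFij
  apply this
  intro x hx
  have hxu := hsub (Set.mem_univ x)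
  rcases hxu with (h1 | h2) | h3
  · exact absurd (Set.eq_empty_iff_forall_notMem.mp hdi x ⟨h1, hx.1⟩) (fun h => h)
  · exact absurd (Set.eq_empty_iff_forall_notMem.mp hdj x ⟨h2, hx.2⟩) (fun h => h)
  · exact h3
end

section
/- In the six-process system (𝔽_D, ℚ_D), consider the execution with faulty set F = {p₅, p₆}. Then processes p₁ and p₂ have depth 1 but do not have depth 2, and processes p₃ and p₄ have depth 0 but do not have depth 1. -/
/-- The six-process asymmetric fail-prone system `𝔽_D` from the paper
(process `pᵢ` is represented by `i - 1 : Fin 6`). -/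
def FFD : Fin 6 → Set (Set (Fin 6)) :=
  ![{({0, 1, 4, 5} : Set (Fin 6)), ({0, 1, 2} : Set (Fin 6))},
    {({0, 1, 4, 5} : Set (Fin 6)), ({0, 1, 2} : Set (Fin 6))},
    {({0, 1, 3} : Set (Fin 6))},
    {({0, 1, 2} : Set (Fin 6))},
    {({0, 1, 3} : Set (Fin 6))},
    {({0, 1, 3} : Set (Fin 6))}]

/-- The six-process quorum system `ℚ_D` from the paper. -/
def QQD : Fin 6 → Set (Set (Fin 6)) :=
  ![{({2, 3} : Set (Fin 6)), ({3, 4, 5} : Set (Fin 6))},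
    {({2, 3} : Set (Fin 6)), ({3, 4, 5} : Set (Fin 6))},
    {({2, 4, 5} : Set (Fin 6))},
    {({3, 4, 5} : Set (Fin 6))},
    {({2, 4, 5} : Set (Fin 6))},
    {({2, 4, 5} : Set (Fin 6))}]

lemma faulty4 : ∀ d, ¬ HasDepth QQD {4, 5} 4 d := by
  intro d h
  cases h with
  | zero p hp => exact hp (by simp)
  | succ p d hp Q hQ hall => exact hp (by simp)

lemma no2_d1 : ¬ HasDepth QQD {4, 5} 2 1 := by
  intro h
  cases h with
  | succ p d hp Q hQ hall =>
    simp only [QQD, Matrix.cons_val_two, Matrix.tail_cons, Matrix.head_cons,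
      Set.mem_singleton_iff] at hQ
    subst hQ
    exact faulty4 0 (hall 4 (by simp))

lemma no3_d1 : ¬ HasDepth QQD {4, 5} 3 1 := by
  intro h
  cases h with
  | succ p d hp Q hQ hall =>
    simp only [QQD, Matrix.cons_val_three, Matrix.tail_cons, Matrix.head_cons,
      Set.mem_singleton_iff] at hQ
    subst hQ
    exact faulty4 0 (hall 4 (by simp))

lemma Q01 : QQD 0 = {({2, 3} : Set (Fin 6)), ({3, 4, 5} : Set (Fin 6))} := rfl
lemma Q11 : QQD 1 = {({2, 3} : Set (Fin 6)), ({3, 4, 5} : Set (Fin 6))} := rfl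

lemma d1_of01 (i : Fin 6) (hi : QQD i = {({2, 3} : Set (Fin 6)), ({3, 4, 5} : Set (Fin 6))})
    (hni : i ∉ ({4, 5} : Set (Fin 6))) : HasDepth QQD {4, 5} i 1 := by
  refine HasDepth.succ i 0 hni {2, 3} (by rw [hi]; left; rfl) ?_
  intro q hq
  refine HasDepth.zero q ?_
  rcases hq with h | h <;> subst h <;> simp

lemma nod2_of01 (i : Fin 6) (hi : QQD i = {({2, 3} : Set (Fin 6)), ({3, 4, 5} : Set (Fin 6))}) :
    ¬ HasDepth QQD {4, 5} i 2 := by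
  intro h
  cases h with
  | succ p d hp Q hQ hall =>
    rw [hi] at hQ
    rcases hQ with h | h <;> subst h
    · exact no2_d1 (hall 2 (by simp))
    · exact faulty4 1 (hall 4 (by simp))

/-- In `(𝔽_D, ℚ_D)` with faulty set `F = {p₅, p₆}`, processes
`p₁, p₂` have depth 1 but not depth 2, and processes `p₃, p₄` have depth 0 but
not depth 1. -/
theorem stmt_16 :
    HasDepth QQD {4, 5} 0 1 ∧ ¬ HasDepth QQD {4, 5} 0 2 ∧
    HasDepth QQD {4, 5} 1 1 ∧ ¬ HasDepth QQD {4, 5} 1 2 ∧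
    HasDepth QQD {4, 5} 2 0 ∧ ¬ HasDepth QQD {4, 5} 2 1 ∧
    HasDepth QQD {4, 5} 3 0 ∧ ¬ HasDepth QQD {4, 5} 3 1 := by
  refine ⟨d1_of01 0 rfl (by simp), nod2_of01 0 rfl, d1_of01 1 rfl (by simp), nod2_of01 1 rfl,
    HasDepth.zero 2 (by simp), no2_d1, HasDepth.zero 3 (by simp), no3_d1⟩
end
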